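/- Heilmann–Lieb theorem: all roots of the matching polynomial μ(G,x) of a finite graph G are real, and if all degrees of G are at most d with d ≥ 2, then every root λ satisfies |λ| ≤ 2√(d−1). -/

import Mathlib

/-! For a finite vertex set `s`, let `μ(s)` be the matching polynomial of the subgraph induced
on `s`. Deleting a vertex `u` gives `μ(s) = x μ(s - u) - ∑_{v ∼ u} μ(s - u - v)`, that is, the
continued-fraction recursion `μ(s) / μ(s - u) = x - ∑_{v ∼ u} (μ(s - u) / μ(s - u - v))⁻¹`.
By induction on `s`: for `Im x > 0` every ratio has positive imaginary part, since inversion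
swaps the two half-planes, so `μ` has no non-real roots. For real `x > 2√(d - 1)` every ratio is
positive, and exceeds `√(d - 1)` at a vertex `u` with fewer than `d` neighbours; in `s - u` each
neighbour of `u` has lost `u`, which is what keeps the induction going. Since `μ(-x) = ±μ(x)`,
there are no roots of absolute value above `2√(d - 1)`. -/

open Classical

/-- `M` is a matching of `G`: a set of edges of `G` that are pairwise disjoint. -/
def IsMatchingSet {V : Type*} (G : SimpleGraph V) (M : Finset (Sym2 V)) : Prop :=
  (∀ e ∈ M, e ∈ G.edgeSet) ∧
    ∀ e ∈ M, ∀ f ∈ M, e ≠ f → ∀ v : V, ¬(v ∈ e ∧ v ∈ f)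

/-- `m_k(G)`: the number of matchings of size `k`. -/
noncomputable def numMatchings {V : Type*} (G : SimpleGraph V) (k : ℕ) : ℕ :=
  {M : Finset (Sym2 V) | IsMatchingSet G M ∧ M.card = k}.ncard

/-- The matching polynomial `μ(G,x) = Σ_k (-1)^k m_k(G) x^{v(G)-2k}`. -/
noncomputable def matchingPoly {V : Type*} [Fintype V] (G : SimpleGraph V) (x : ℂ) : ℂ :=
  ∑ k ∈ Finset.range (Fintype.card V / 2 + 1),
    (-1) ^ k * (numMatchings G k : ℂ) * x ^ (Fintype.card V - 2 * k)


open Finset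

section Matchings

variable {V : Type*} {G : SimpleGraph V} {M N : Finset (Sym2 V)}

theorem IsMatchingSet.mono (hM : IsMatchingSet G M) (hNM : N ⊆ M) : IsMatchingSet G N :=
  ⟨fun e he => hM.1 e (hNM he), fun e he f hf => hM.2 e (hNM he) f (hNM hf)⟩

theorem IsMatchingSet.insert {e : Sym2 V} (hM : IsMatchingSet G M) (he : e ∈ G.edgeSet)
    (hdisj : ∀ f ∈ M, ∀ v ∈ e, v ∉ f) : IsMatchingSet G (insert e M) := by
  refine ⟨by simpa [he] using hM.1, ?_⟩
  simp only [mem_insert]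
  rintro f (rfl | hf) g (rfl | hg) hfg v ⟨hvf, hvg⟩
  · exact hfg rfl
  · exact hdisj g hg v hvf hvg
  · exact hdisj f hf v hvg hvf
  · exact hM.2 f hf g hg hfg v ⟨hvf, hvg⟩

theorem IsMatchingSet.two_mul_card_le {s : Finset V} (hM : IsMatchingSet G M)
    (hMs : M ⊆ s.sym2) : 2 * #M ≤ #s := by
  have hdisj : (M : Set (Sym2 V)).PairwiseDisjoint Sym2.toFinset := by
    intro e he f hf hef
    exact Finset.disjoint_left.2 fun v hve hvf =>
      hM.2 e he f hf hef v ⟨Sym2.mem_toFinset.1 hve, Sym2.mem_toFinset.1 hvf⟩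
  calc 2 * #M = ∑ e ∈ M, #e.toFinset := by
        rw [sum_congr rfl fun e he =>
          Sym2.card_toFinset_of_not_isDiag e (G.not_isDiag_of_mem_edgeSet (hM.1 e he)),
          sum_const, smul_eq_mul, mul_comm]
    _ = #(M.biUnion Sym2.toFinset) := (card_biUnion hdisj).symm
    _ ≤ #s := card_le_card fun v hv => by
        obtain ⟨e, he, hve⟩ := mem_biUnion.1 hv
        exact mem_sym2_iff.1 (hMs he) v (Sym2.mem_toFinset.1 hve)

end Matchings

namespace SimpleGraph

variable {V : Type*} (G : SimpleGraph V)

noncomputable def matchingsOn (s : Finset V) : Finset (Finset (Sym2 V)) :=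
  s.sym2.powerset.filter (IsMatchingSet G)

noncomputable def matchingPolyOn {R : Type*} [CommRing R] (s : Finset V) (x : R) : R :=
  ∑ M ∈ G.matchingsOn s, (-1) ^ #M * x ^ (#s - 2 * #M)

variable {G} {s : Finset V} {u v : V}

theorem mem_matchingsOn {M : Finset (Sym2 V)} :
    M ∈ G.matchingsOn s ↔ M ⊆ s.sym2 ∧ IsMatchingSet G M := by
  simp [matchingsOn]

theorem matchingsOn_empty : G.matchingsOn ∅ = {∅} := by
  ext M
  simp only [mem_matchingsOn, sym2_empty, subset_empty, mem_singleton, and_iff_left_iff_imp]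
  rintro rfl
  exact ⟨by simp, by simp⟩

theorem filter_forall_not_mem_matchingsOn :
    {M ∈ G.matchingsOn s | ∀ e ∈ M, u ∉ e} = G.matchingsOn (s.erase u) := by
  ext M
  simp only [mem_filter, mem_matchingsOn, subset_iff, mem_sym2_iff, mem_erase]
  grind

theorem filter_exists_mem_matchingsOn :
    {M ∈ G.matchingsOn s | ¬∀ e ∈ M, u ∉ e} =
      {v ∈ s | G.Adj u v}.biUnion fun v => {M ∈ G.matchingsOn s | s(u, v) ∈ M} := by
  ext M
  simp only [mem_filter, mem_biUnion, not_forall, not_not]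
  constructor
  · rintro ⟨hM, e, he, hue⟩
    have hMs := mem_matchingsOn.1 hM
    have hev : s(u, Sym2.Mem.other hue) = e := Sym2.other_spec hue
    refine ⟨Sym2.Mem.other hue, ⟨?_, ?_⟩, hM, hev.symm ▸ he⟩
    · exact mem_sym2_iff.1 (hMs.1 he) _ (Sym2.other_mem hue)
    · exact G.mem_edgeSet.1 (hev.symm ▸ hMs.2.1 e he)
  · rintro ⟨v, -, hM, hvM⟩
    exact ⟨hM, _, hvM, Sym2.mem_mk_left u v⟩

theorem pairwiseDisjoint_filter_mem_matchingsOn (t : Finset V) :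
    (t : Set V).PairwiseDisjoint fun v => {M ∈ G.matchingsOn s | s(u, v) ∈ M} := by
  intro v _ w _ hvw
  refine Finset.disjoint_left.2 fun M hMv hMw => ?_
  obtain ⟨hM, huv⟩ := mem_filter.1 hMv
  have huw := (mem_filter.1 hMw).2
  exact (mem_matchingsOn.1 hM).2.2 _ huv _ huw (fun h => hvw (Sym2.congr_right.1 h)) u
    ⟨Sym2.mem_mk_left u v, Sym2.mem_mk_left u w⟩

theorem filter_mem_matchingsOn_eq_image (hu : u ∈ s) (hv : v ∈ s) (huv : G.Adj u v) :
    {M ∈ G.matchingsOn s | s(u, v) ∈ M} =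
      (G.matchingsOn ((s.erase u).erase v)).image (insert s(u, v)) := by
  ext M
  simp only [mem_filter, mem_image, mem_matchingsOn]
  constructor
  · rintro ⟨⟨hMs, hM⟩, he⟩
    refine ⟨M.erase s(u, v), ⟨fun f hf => ?_, hM.mono (erase_subset _ _)⟩, insert_erase he⟩
    obtain ⟨hfe, hfM⟩ := mem_erase.1 hf
    have hdisj := hM.2 f hfM _ he hfe
    refine mem_sym2_iff.2 fun w hw => mem_erase.2 ⟨?_, mem_erase.2 ⟨?_, ?_⟩⟩
    · rintro rfl; exact hdisj w ⟨hw, Sym2.mem_mk_right u w⟩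
    · rintro rfl; exact hdisj w ⟨hw, Sym2.mem_mk_left w v⟩
    · exact mem_sym2_iff.1 (hMs hfM) w hw
  · rintro ⟨M', ⟨hM's, hM'⟩, rfl⟩
    have hout : ∀ f ∈ M', ∀ w ∈ s(u, v), w ∉ f := by
      intro f hf w hw hwf
      have := mem_sym2_iff.1 (hM's hf) w hwf
      rcases Sym2.mem_iff.1 hw with rfl | rfl <;> simp at this
    refine ⟨⟨insert_subset (mem_sym2_iff.2 ?_) (hM's.trans ?_), hM'.insert huv hout⟩,
      mem_insert_self _ _⟩
    · rintro w hw; rcases Sym2.mem_iff.1 hw with rfl | rfl <;> assumption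
    · exact sym2_mono ((erase_subset _ _).trans (erase_subset _ _))

theorem two_mul_card_le_of_mem_matchingsOn {M : Finset (Sym2 V)} (hM : M ∈ G.matchingsOn s) :
    2 * #M ≤ #s :=
  (mem_matchingsOn.1 hM).2.two_mul_card_le (mem_matchingsOn.1 hM).1

section CommRing

variable {R : Type*} [CommRing R]

@[simp]
theorem matchingPolyOn_empty (x : R) : G.matchingPolyOn ∅ x = 1 := by
  simp [matchingPolyOn, matchingsOn_empty]

theorem sum_matchingsOn_erase (hu : u ∈ s) (x : R) :
    ∑ M ∈ G.matchingsOn (s.erase u), (-1) ^ #M * x ^ (#s - 2 * #M) =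
      x * G.matchingPolyOn (s.erase u) x := by
  rw [matchingPolyOn, mul_sum]
  refine sum_congr rfl fun M hM => ?_
  have hM' := two_mul_card_le_of_mem_matchingsOn hM
  rw [card_erase_of_mem hu] at hM' ⊢
  have hexp : #s - 2 * #M = #s - 1 - 2 * #M + 1 := by
    have := card_pos.2 ⟨u, hu⟩
    omega
  rw [hexp, pow_succ]
  ring

theorem sum_filter_mem_matchingsOn (hu : u ∈ s) (hv : v ∈ s) (huv : G.Adj u v) (x : R) :
    ∑ M ∈ G.matchingsOn s with s(u, v) ∈ M, (-1) ^ #M * x ^ (#s - 2 * #M) =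
      -G.matchingPolyOn ((s.erase u).erase v) x := by
  have hnot : ∀ M' ∈ G.matchingsOn ((s.erase u).erase v), s(u, v) ∉ M' := fun M' hM' he => by
    simpa using mem_sym2_iff.1 ((mem_matchingsOn.1 hM').1 he) u (Sym2.mem_mk_left u v)
  have hcard : #((s.erase u).erase v) = #s - 2 := by
    rw [card_erase_of_mem (mem_erase.2 ⟨huv.ne', hv⟩), card_erase_of_mem hu]; rfl
  rw [filter_mem_matchingsOn_eq_image hu hv huv, sum_image, matchingPolyOn, ← sum_neg_distrib]
  · refine sum_congr rfl fun M' hM' => ?_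
    rw [card_insert_of_notMem (hnot M' hM'), hcard,
      show #s - 2 * (#M' + 1) = #s - 2 - 2 * #M' by omega, pow_succ]
    ring
  · intro M hM M' hM' h
    rw [← erase_insert (hnot M hM), ← erase_insert (hnot M' hM'), h]

theorem matchingPolyOn_eq_sub (hu : u ∈ s) (x : R) :
    G.matchingPolyOn s x = x * G.matchingPolyOn (s.erase u) x -
      ∑ v ∈ s with G.Adj u v, G.matchingPolyOn ((s.erase u).erase v) x := by
  rw [matchingPolyOn, ← sum_filter_add_sum_filter_not _ (fun M => ∀ e ∈ M, u ∉ e),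
    filter_forall_not_mem_matchingsOn, filter_exists_mem_matchingsOn,
    sum_biUnion (pairwiseDisjoint_filter_mem_matchingsOn _), sum_matchingsOn_erase hu,
    sum_congr rfl fun v hv => sum_filter_mem_matchingsOn hu (mem_filter.1 hv).1
      (mem_filter.1 hv).2 x, sum_neg_distrib, sub_eq_add_neg]

theorem matchingPolyOn_neg (x : R) :
    G.matchingPolyOn s (-x) = (-1) ^ #s * G.matchingPolyOn s x := by
  rw [matchingPolyOn, matchingPolyOn, mul_sum]
  refine sum_congr rfl fun M hM => ?_
  obtain ⟨k, hk⟩ := Nat.exists_eq_add_of_le (two_mul_card_le_of_mem_matchingsOn hM)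
  rw [hk, Nat.add_sub_cancel_left, pow_add, pow_mul, neg_one_sq, one_pow, one_mul, neg_pow]
  ring

theorem map_matchingPolyOn {S : Type*} [CommRing S] (f : R →+* S) (x : R) :
    f (G.matchingPolyOn s x) = G.matchingPolyOn s (f x) := by
  simp [matchingPolyOn, map_sum]

end CommRing

theorem matchingPolyOn_div_erase {K : Type*} [Field K] (hu : u ∈ s) {x : K}
    (h : G.matchingPolyOn (s.erase u) x ≠ 0) :
    G.matchingPolyOn s x / G.matchingPolyOn (s.erase u) x = x -
      ∑ v ∈ s with G.Adj u v,
        (G.matchingPolyOn (s.erase u) x / G.matchingPolyOn ((s.erase u).erase v) x)⁻¹ := by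
  simp only [inv_div]
  rw [matchingPolyOn_eq_sub hu, sub_div, mul_div_cancel_right₀ _ h, sum_div]

theorem matchingPolyOn_ne_zero_of_forall_div_ne_zero {K : Type*} [Field K] {x : K}
    (h : ∀ u ∈ s, G.matchingPolyOn s x / G.matchingPolyOn (s.erase u) x ≠ 0) :
    G.matchingPolyOn s x ≠ 0 := by
  rcases s.eq_empty_or_nonempty with rfl | ⟨u, hu⟩
  · simp
  · exact fun h0 => h u hu (by rw [h0, zero_div])

theorem im_matchingPolyOn_div_erase_pos {z : ℂ} (hz : 0 < z.im) (hu : u ∈ s) :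
    0 < (G.matchingPolyOn s z / G.matchingPolyOn (s.erase u) z).im := by
  induction s using Finset.strongInduction generalizing u with
  | H s ih =>
  have ih' : ∀ v ∈ s.erase u,
      0 < (G.matchingPolyOn (s.erase u) z / G.matchingPolyOn ((s.erase u).erase v) z).im :=
    fun v hv => ih _ (erase_ssubset hu) hv
  have hne : G.matchingPolyOn (s.erase u) z ≠ 0 :=
    matchingPolyOn_ne_zero_of_forall_div_ne_zero fun v hv h =>
      (ih' v hv).ne' (by rw [h, Complex.zero_im])
  rw [matchingPolyOn_div_erase hu hne, Complex.sub_im, Complex.im_sum]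
  have hterm : ∀ v ∈ {v ∈ s | G.Adj u v},
      (G.matchingPolyOn (s.erase u) z / G.matchingPolyOn ((s.erase u).erase v) z)⁻¹.im ≤ 0 := by
    intro v hv
    obtain ⟨hvs, huv⟩ := mem_filter.1 hv
    have := ih' v (mem_erase.2 ⟨huv.ne', hvs⟩)
    rw [Complex.inv_im]
    exact div_nonpos_of_nonpos_of_nonneg (by linarith) (Complex.normSq_nonneg _)
  linarith [sum_nonpos hterm]

theorem matchingPolyOn_ne_zero_of_im_ne_zero {z : ℂ} (hz : z.im ≠ 0) :
    G.matchingPolyOn s z ≠ 0 := by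
  have hpos {w : ℂ} (hw : 0 < w.im) : G.matchingPolyOn s w ≠ 0 :=
    matchingPolyOn_ne_zero_of_forall_div_ne_zero fun u hu h =>
      (im_matchingPolyOn_div_erase_pos (G := G) hw hu).ne' (by rw [h, Complex.zero_im])
  rcases hz.lt_or_gt with hz | hz
  · have := hpos (w := (starRingEnd ℂ) z) (by simpa using hz)
    rwa [← map_matchingPolyOn, map_ne_zero] at this
  · exact hpos hz

theorem sub_card_div_le_matchingPolyOn_div_erase {x c : ℝ} (hc : 0 < c) (hu : u ∈ s)
    (h : G.matchingPolyOn (s.erase u) x ≠ 0)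
    (hv : ∀ v ∈ {v ∈ s | G.Adj u v},
      c ≤ G.matchingPolyOn (s.erase u) x / G.matchingPolyOn ((s.erase u).erase v) x) :
    x - #{v ∈ s | G.Adj u v} / c ≤
      G.matchingPolyOn s x / G.matchingPolyOn (s.erase u) x := by
  rw [matchingPolyOn_div_erase hu h, div_eq_mul_inv, ← nsmul_eq_mul, ← sum_const]
  exact sub_le_sub_left (sum_le_sum fun v hv' => inv_anti₀ hc (hv v hv')) x

theorem card_filter_adj_erase_lt {d : ℕ} {v : V} (huv : G.Adj v u)
    (hd : #{w ∈ s | G.Adj v w} ≤ d) (hu : u ∈ s) : #{w ∈ s.erase u | G.Adj v w} < d := by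
  rw [filter_erase]
  exact (card_erase_lt_of_mem (mem_filter.2 ⟨hu, huv⟩)).trans_le hd

theorem matchingPolyOn_pos_and_sqrt_lt_div_erase {d : ℕ} (hd : 2 ≤ d)
    (hdeg : ∀ v ∈ s, #{w ∈ s | G.Adj v w} ≤ d) {x : ℝ} (hx : 2 * √(d - 1) < x) :
    0 < G.matchingPolyOn s x ∧ ∀ u ∈ s, #{w ∈ s | G.Adj u w} < d →
      √(d - 1) < G.matchingPolyOn s x / G.matchingPolyOn (s.erase u) x := by
  set c := √((d : ℝ) - 1)
  have hd' : (2 : ℝ) ≤ d := by exact_mod_cast hd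
  have hc : 0 < c := Real.sqrt_pos.2 (by linarith)
  have hcc : c * c = d - 1 := Real.mul_self_sqrt (by linarith)
  have hdc : (d - 1) / c = c := by rw [← hcc, mul_div_cancel_right₀ _ hc.ne']
  induction s using Finset.strongInduction with
  | H s ih =>
  have ih' (u) (hu : u ∈ s) := ih _ (erase_ssubset hu) fun v hv =>
    (card_le_card (filter_subset_filter _ (erase_subset u s))).trans (hdeg v (mem_of_mem_erase hv))
  have hratio : ∀ u ∈ s, x - #{v ∈ s | G.Adj u v} / c ≤
      G.matchingPolyOn s x / G.matchingPolyOn (s.erase u) x := by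
    intro u hu
    refine sub_card_div_le_matchingPolyOn_div_erase hc hu (ih' u hu).1.ne' fun v hv => ?_
    obtain ⟨hvs, huv⟩ := mem_filter.1 hv
    exact ((ih' u hu).2 v (mem_erase.2 ⟨huv.ne', hvs⟩)
      (card_filter_adj_erase_lt huv.symm (hdeg v hvs) hu)).le
  constructor
  · rcases s.eq_empty_or_nonempty with rfl | ⟨u, hu⟩
    · simp
    have hle : (#{w ∈ s | G.Adj u w} : ℝ) ≤ d := by exact_mod_cast hdeg u hu
    have hd2c : (d : ℝ) / c ≤ 2 * c := by
      rw [div_le_iff₀ hc]; nlinarith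
    have hr : 0 < G.matchingPolyOn s x / G.matchingPolyOn (s.erase u) x := calc
      0 < x - d / c := by linarith
      _ ≤ x - #{w ∈ s | G.Adj u w} / c := by gcongr
      _ ≤ _ := hratio u hu
    simpa [(ih' u hu).1.ne'] using mul_pos hr (ih' u hu).1
  · intro u hu hlt
    have hle : (#{w ∈ s | G.Adj u w} : ℝ) + 1 ≤ d := by exact_mod_cast hlt
    calc c < x - (d - 1) / c := by linarith
      _ ≤ x - #{w ∈ s | G.Adj u w} / c := by gcongr; linarith
      _ ≤ _ := hratio u hu

theorem matchingPolyOn_ne_zero_of_two_mul_sqrt_lt_abs {d : ℕ} (hd : 2 ≤ d)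
    (hdeg : ∀ v ∈ s, #{w ∈ s | G.Adj v w} ≤ d) {x : ℝ} (hx : 2 * √(d - 1) < |x|) :
    G.matchingPolyOn s x ≠ 0 := by
  rcases lt_abs.1 hx with hx | hx
  · exact (matchingPolyOn_pos_and_sqrt_lt_div_erase hd hdeg hx).1.ne'
  · have := (matchingPolyOn_pos_and_sqrt_lt_div_erase hd hdeg hx).1.ne'
    rwa [matchingPolyOn_neg, mul_ne_zero_iff, and_iff_right (pow_ne_zero _ (by norm_num))] at this

variable [Fintype V]

theorem numMatchings_eq_card (k : ℕ) :
    numMatchings G k = #{M ∈ G.matchingsOn univ | #M = k} := by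
  rw [numMatchings, ← Set.ncard_coe_finset]
  congr 1
  ext M
  simp [mem_matchingsOn]

theorem matchingPoly_eq_matchingPolyOn_univ (z : ℂ) :
    matchingPoly G z = G.matchingPolyOn univ z := by
  have hmaps : ∀ M ∈ G.matchingsOn univ, #M ∈ range (Fintype.card V / 2 + 1) := fun M hM => by
    have := two_mul_card_le_of_mem_matchingsOn hM
    rw [card_univ] at this
    rw [mem_range]
    omega
  rw [matchingPolyOn, ← sum_fiberwise_of_maps_to hmaps, matchingPoly, card_univ]
  refine sum_congr rfl fun k _ => ?_
  rw [sum_congr rfl fun M hM => by rw [(mem_filter.1 hM).2], sum_const, nsmul_eq_mul,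
    numMatchings_eq_card]
  ring

end SimpleGraph

/-- Heilmann–Lieb: all roots of the matching polynomial are real, and if all
degrees are at most `d` with `d ≥ 2` then every root `λ` satisfies `|λ| ≤ 2√(d-1)`. -/
theorem heilmann_lieb {V : Type*} [Fintype V] (G : SimpleGraph V) :
    (∀ z : ℂ, matchingPoly G z = 0 → z.im = 0) ∧
    (∀ d : ℕ, 2 ≤ d → (∀ v : V, (G.neighborSet v).ncard ≤ d) →
      ∀ z : ℂ, matchingPoly G z = 0 → ‖z‖ ≤ 2 * Real.sqrt ((d : ℝ) - 1)) := by
  have hreal (z : ℂ) (hz : matchingPoly G z = 0) : z.im = 0 := by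
    by_contra h
    rw [SimpleGraph.matchingPoly_eq_matchingPolyOn_univ] at hz
    exact SimpleGraph.matchingPolyOn_ne_zero_of_im_ne_zero h hz
  refine ⟨hreal, fun d hd hdeg z hz => ?_⟩
  have hz' : z = (z.re : ℂ) := Complex.ext rfl (by simpa using hreal z hz)
  have hdeg' : ∀ v ∈ (univ : Finset V), #{w ∈ univ | G.Adj v w} ≤ d := fun v _ => by
    rw [← Set.ncard_coe_finset]
    convert hdeg v
    ext; simp
  rw [hz', Complex.norm_real, Real.norm_eq_abs]
  refine not_lt.1 fun hlt =>
    SimpleGraph.matchingPolyOn_ne_zero_of_two_mul_sqrt_lt_abs hd hdeg' hlt ?_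
  have hcast := SimpleGraph.map_matchingPolyOn (G := G) (s := univ) Complex.ofRealHom z.re
  rw [Complex.ofRealHom_eq_coe, Complex.ofRealHom_eq_coe, ← hz',
    ← SimpleGraph.matchingPoly_eq_matchingPolyOn_univ, hz] at hcast
  exact_mod_cast hcast
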